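/- arXiv:1410.2798 — 4 statements merged into one kernel-verified Lean document; each statement's English description precedes it below -/
import Mathlib

section
/- Let A be a gauge field on the torus T = (ℤ/Lℤ)³ such that dA(p) = 0 for every plaquette p of T, (τ⁰A)(x) = 0 for every x, and (Q•A)_μ = 0 for μ = 1,2,3. Then A(b) = 0 for every bond b of T. -/
open Finset

noncomputable section

/-- Points of the discrete torus `(ℤ/Nℤ)³`. -/
abbrev TPt (N : ℕ) : Type := Fin 3 → ZMod N

/-- The standard unit vector `e_μ` in the torus. -/
def unitVec (N : ℕ) (μ : Fin 3) : TPt N := fun i => if i = μ then 1 else 0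

/-- The representative of `a ∈ ℤ/Nℤ` in the symmetric range `{-(N-1)/2, …, (N-1)/2}`
(for odd `N`). -/
def symRep (N : ℕ) (a : ZMod N) : ℤ :=
  if 2 * (a.val : ℤ) + 1 ≤ (N : ℤ) then (a.val : ℤ) else (a.val : ℤ) - (N : ℤ)

/-- Shift a torus point by `k` steps in direction `μ`. -/
def shiftT {N : ℕ} (z : TPt N) (μ : Fin 3) (k : ℤ) : TPt N :=
  fun i => if i = μ then z i + (k : ZMod N) else z i

/-- The sum of the gauge field `A` along the straight lattice path from `z` to `z + t·e_μ`. -/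
def segT {N : ℕ} (A : TPt N → TPt N → ℝ) (z : TPt N) (μ : Fin 3) (t : ℤ) : ℝ :=
  if 0 ≤ t then ∑ j ∈ Finset.range t.toNat, A (shiftT z μ (j : ℤ)) (shiftT z μ ((j : ℤ) + 1))
  else ∑ j ∈ Finset.range (-t).toNat, A (shiftT z μ (-(j : ℤ))) (shiftT z μ (-(j : ℤ) - 1))

/-- The field strength `dA` on the plaquette based at `x` spanned by `e_μ, e_ν`. -/
def plaqT {N : ℕ} (A : TPt N → TPt N → ℝ) (x : TPt N) (μ ν : Fin 3) : ℝ :=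
  A x (x + unitVec N μ) + A (x + unitVec N μ) (x + unitVec N μ + unitVec N ν)
    + A (x + unitVec N μ + unitVec N ν) (x + unitVec N ν) + A (x + unitVec N ν) x

/-- The corner of the rectilinear path `Γ^π_{yx}` reached after the first `m` coordinate
moves. -/
def interPtT {N : ℕ} (y x : TPt N) (π : Equiv.Perm (Fin 3)) (m : ℕ) : TPt N :=
  fun i => if ((π.symm i : Fin 3) : ℕ) < m then x i else y i

/-- `A(Γ^π_{yx})`: the sum of `A` along the rectilinear path (not wrapping around the
torus) from `y` to `x`, moving the coordinates to their final values in the order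
`π 0, π 1, π 2`; the coordinate increments are the symmetric representatives of `x - y`. -/
def gammaSumT {N : ℕ} (A : TPt N → TPt N → ℝ) (π : Equiv.Perm (Fin 3)) (y x : TPt N) : ℝ :=
  ∑ m : Fin 3, segT A (interPtT y x π (m : ℕ)) (π m) (symRep N (x (π m) - y (π m)))

/-- `(τA)(y,x) = (1/6) Σ_π A(Γ^π_{yx})`, averaged over the `3! = 6` permutations. -/
def tauBlk {N : ℕ} (A : TPt N → TPt N → ℝ) (y x : TPt N) : ℝ :=
  (1 / 6) * ∑ π : Equiv.Perm (Fin 3), gammaSumT A π y x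

/-- The block of radius `R` centered at `y`: all `x` whose coordinates relative to `y`
have symmetric representative of absolute value at most `R`. -/
def blockF (N : ℕ) [NeZero N] (R : ℤ) (y : TPt N) : Finset (TPt N) :=
  Finset.univ.filter fun x => ∀ i, |symRep N (x i - y i)| ≤ R

/-- Membership in the coarse lattice `(Lℤ/Nℤ)³ ⊆ (ℤ/Nℤ)³`. -/
def isCoarse (L N : ℕ) (y : TPt N) : Prop :=
  ∀ i, ∃ c : ZMod N, y i = (L : ZMod N) * c

/-- The coarse unit vector `L·e_μ`. -/
def cUnitVec (L N : ℕ) (μ : Fin 3) : TPt N := fun i => if i = μ then (L : ZMod N) else 0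

/-- The block-averaged field on coarse bonds:
`(QA)(y, y+Le_μ) = L⁻⁴ Σ_{x ∈ B(y)} A(Γ_{x,x+Le_μ})`. -/
def Qc (L : ℕ) {N : ℕ} [NeZero N] (A : TPt N → TPt N → ℝ) (y : TPt N) (μ : Fin 3) : ℝ :=
  ((L : ℝ) ^ 4)⁻¹ * ∑ x ∈ blockF N (((L : ℤ) - 1) / 2) y, segT A x μ (L : ℤ)

/-!
Flatness lets a straight path slide sideways across plaquettes. Sliding the last legs of the
axial-gauge path `Γ_{0x}` shows that moving `x` to `x + e_μ` changes `A(Γ_{0x})` by exactly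
`A(x, x + e_μ)`, unless the step crosses the seam where the symmetric representative of `x_μ`
jumps from `(L-1)/2` to `-(L-1)/2`; so `τ⁰A = 0` kills every bond off the seam. Sliding a whole
loop `Γ_{x,μ}` shows that its sum does not depend on `x`, so `Q•A = 0` makes every loop sum
vanish. Each loop crosses the seam in exactly one bond and all its other bonds vanish, so that
bond vanishes as well.
-/

section Paths

variable {N : ℕ}

@[simp]
lemma shiftT_zero (z : TPt N) (μ : Fin 3) : shiftT z μ 0 = z := by
  funext i; simp [shiftT]

lemma shiftT_shiftT (z : TPt N) (μ : Fin 3) (s t : ℤ) :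
    shiftT (shiftT z μ s) μ t = shiftT z μ (s + t) := by
  funext i; by_cases h : i = μ <;> simp [shiftT, h, add_assoc]

lemma shiftT_add_one (z : TPt N) (μ : Fin 3) (t : ℤ) :
    shiftT z μ (t + 1) = shiftT z μ t + unitVec N μ := by
  funext i; by_cases h : i = μ <;> simp [shiftT, unitVec, h, add_assoc]

lemma shiftT_one (z : TPt N) (μ : Fin 3) : shiftT z μ 1 = z + unitVec N μ := by
  simpa using shiftT_add_one z μ 0

lemma shiftT_add_right (z v : TPt N) (μ : Fin 3) (t : ℤ) :
    shiftT (z + v) μ t = shiftT z μ t + v := by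
  funext i; by_cases h : i = μ <;> simp [shiftT, h, add_right_comm]

@[simp]
lemma shiftT_natCast_self (z : TPt N) (μ : Fin 3) : shiftT z μ N = z := by
  funext i; simp [shiftT]

variable {A : TPt N → TPt N → ℝ}

@[simp]
lemma segT_zero (z : TPt N) (μ : Fin 3) : segT A z μ 0 = 0 := by
  simp [segT]

lemma segT_natCast (z : TPt N) (μ : Fin 3) (n : ℕ) :
    segT A z μ n = ∑ j ∈ range n, A (shiftT z μ j) (shiftT z μ (j + 1)) := by
  simp [segT]

lemma segT_neg_natCast (z : TPt N) (μ : Fin 3) (n : ℕ) :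
    segT A z μ (-n) = ∑ j ∈ range n, A (shiftT z μ (-j)) (shiftT z μ (-j - 1)) := by
  rcases Nat.eq_zero_or_pos n with rfl | hn
  · simp [segT]
  · simp [segT, hn.ne']

lemma segT_add_one (hA : ∀ x x', A x x' = -A x' x) (z : TPt N) (μ : Fin 3) (t : ℤ) :
    segT A z μ (t + 1) = segT A z μ t + A (shiftT z μ t) (shiftT z μ (t + 1)) := by
  rcases le_or_gt 0 t with ht | ht
  · obtain ⟨n, rfl⟩ := Int.eq_ofNat_of_zero_le ht
    rw [← Nat.cast_succ, segT_natCast, segT_natCast, sum_range_succ, Nat.cast_succ]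
  · obtain ⟨n, rfl⟩ : ∃ n : ℕ, t = -(n + 1 : ℕ) := ⟨(-t - 1).toNat, by omega⟩
    rw [show -((n + 1 : ℕ) : ℤ) + 1 = -n by push_cast; ring, segT_neg_natCast,
      segT_neg_natCast, sum_range_succ,
      show -(n : ℤ) - 1 = -((n + 1 : ℕ) : ℤ) by push_cast; ring, hA (shiftT z μ (-n))]
    ring

lemma segT_add (hA : ∀ x x', A x x' = -A x' x) (z : TPt N) (μ : Fin 3) (s t : ℤ) :
    segT A z μ (s + t) = segT A z μ s + segT A (shiftT z μ s) μ t := by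
  induction t using Int.induction_on with
  | zero => simp
  | succ i ih =>
    rw [← add_assoc, segT_add_one hA, segT_add_one hA, ih, shiftT_shiftT, shiftT_shiftT,
      add_assoc s]
    ring
  | pred i ih =>
    generalize ht : -(i : ℤ) - 1 = t
    rw [show -(i : ℤ) = t + 1 by omega, ← add_assoc, segT_add_one hA, segT_add_one hA,
      shiftT_shiftT, shiftT_shiftT, add_assoc] at ih
    linarith

end Paths

section Flat

variable {N : ℕ} {A : TPt N → TPt N → ℝ}

def IsFlat (A : TPt N → TPt N → ℝ) : Prop :=
  ∀ (x : TPt N) (μ ν : Fin 3), μ ≠ ν → plaqT A x μ ν = 0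

lemma IsFlat.bond_add_bond_comm (hA : ∀ x x', A x x' = -A x' x) (hflat : IsFlat A)
    (x : TPt N) {μ ν : Fin 3} (hμν : μ ≠ ν) :
    A x (x + unitVec N μ) + A (x + unitVec N μ) (x + unitVec N ν + unitVec N μ)
      = A x (x + unitVec N ν) + A (x + unitVec N ν) (x + unitVec N ν + unitVec N μ) := by
  have hp := hflat x μ ν hμν
  rw [plaqT, add_right_comm x] at hp
  linarith [hA (x + unitVec N ν + unitVec N μ) (x + unitVec N ν), hA (x + unitVec N ν) x]

/-- Sliding a straight path sideways by one step across a strip of flat plaquettes. -/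
lemma IsFlat.bond_add_segT_comm (hA : ∀ x x', A x x' = -A x' x) (hflat : IsFlat A)
    (z : TPt N) {μ ν : Fin 3} (hμν : μ ≠ ν) (t : ℤ) :
    A z (z + unitVec N μ) + segT A (z + unitVec N μ) ν t
      = segT A z ν t + A (shiftT z ν t) (shiftT z ν t + unitVec N μ) := by
  induction t using Int.induction_on with
  | zero => simp
  | succ i ih =>
    have := hflat.bond_add_bond_comm hA (shiftT z ν i) hμν
    rw [segT_add_one hA, segT_add_one hA, shiftT_add_right, shiftT_add_right, shiftT_add_one]
    linarith
  | pred i ih =>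
    generalize ht : -(i : ℤ) - 1 = t
    have := hflat.bond_add_bond_comm hA (shiftT z ν t) hμν
    rw [show -(i : ℤ) = t + 1 by omega, segT_add_one hA, segT_add_one hA, shiftT_add_right,
      shiftT_add_right, shiftT_add_one] at ih
    linarith

end Flat

section Loops

variable {N : ℕ}

lemma eq_apply_zero_of_forall_add_unitVec {β : Type*} [NeZero N] {f : TPt N → β}
    (hf : ∀ z ρ, f (z + unitVec N ρ) = f z) (z : TPt N) : f z = f 0 := by
  have hmul : ∀ (n : ℕ) w ρ, f (w + n • unitVec N ρ) = f w := by
    intro n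
    induction n with
    | zero => simp
    | succ k ih => intro w ρ; rw [succ_nsmul, ← add_assoc, hf, ih]
  have hz : z = 0 + (z 0).val • unitVec N 0 + (z 1).val • unitVec N 1
      + (z 2).val • unitVec N 2 := by
    funext i
    fin_cases i <;> simp only [Pi.add_apply, Pi.smul_apply, unitVec, Pi.zero_apply] <;> simp
  rw [hz, hmul, hmul, hmul]

lemma eq_zero_of_forall_add_unitVec_of_sum_eq_zero [NeZero N] {f : TPt N → ℝ}
    (hf : ∀ z ρ, f (z + unitVec N ρ) = f z) (hsum : ∑ z, f z = 0) (z : TPt N) : f z = 0 := by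
  rw [Fintype.sum_congr _ _ (eq_apply_zero_of_forall_add_unitVec hf), sum_const, card_univ,
    smul_eq_zero] at hsum
  rw [eq_apply_zero_of_forall_add_unitVec hf z]
  exact hsum.resolve_left Fintype.card_ne_zero

variable {A : TPt N → TPt N → ℝ}

lemma IsFlat.segT_loop_add_unitVec (hA : ∀ x x', A x x' = -A x' x) (hflat : IsFlat A)
    (z : TPt N) (μ ρ : Fin 3) : segT A (z + unitVec N ρ) μ N = segT A z μ N := by
  rcases eq_or_ne ρ μ with rfl | hρμ
  · have h := segT_add hA z ρ 1 N
    rw [add_comm, segT_add hA, shiftT_natCast_self, shiftT_one] at h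
    linarith
  · have h := hflat.bond_add_segT_comm hA z hρμ N
    rw [shiftT_natCast_self] at h
    linarith

lemma bond_eq_zero_of_segT_loop_eq_zero [NeZero N] {x : TPt N} {μ : Fin 3}
    (hloop : segT A x μ N = 0) (hbond : ∀ y, y μ ≠ x μ → A y (y + unitVec N μ) = 0) :
    A x (x + unitVec N μ) = 0 := by
  obtain ⟨n, rfl⟩ := Nat.exists_eq_add_one_of_ne_zero (NeZero.ne N)
  have hoff : ∀ j ∈ range n,
      A (shiftT x μ ((j + 1 : ℕ) : ℤ)) (shiftT x μ (((j + 1 : ℕ) : ℤ) + 1)) = 0 := by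
    intro j hj
    rw [shiftT_add_one]
    apply hbond
    have hne : ((j + 1 : ℕ) : ZMod (n + 1)) ≠ 0 := by
      rw [Ne, ZMod.natCast_eq_zero_iff]
      exact Nat.not_dvd_of_pos_of_lt (by omega) (by simpa using hj)
    simpa [shiftT] using hne
  rw [segT_natCast, sum_range_succ', sum_eq_zero hoff, zero_add] at hloop
  simpa [shiftT_one] using hloop

end Loops

section SymRep

variable {N : ℕ}

lemma symRep_cast [NeZero N] (a : ZMod N) : ((symRep N a : ℤ) : ZMod N) = a := by
  unfold symRep
  split_ifs <;> simp

lemma symRep_add_one [NeZero N] (hN : Odd N) {a : ZMod N} (ha : a.val ≠ (N - 1) / 2) :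
    symRep N (a + 1) = symRep N a + 1 := by
  obtain ⟨k, rfl⟩ := hN
  have hlt := ZMod.val_lt a
  have hval : (a + 1).val = (a.val + 1) % (2 * k + 1) := by
    rw [← ZMod.val_natCast, Nat.cast_succ, ZMod.natCast_zmod_val]
  rcases (a.val + 1).lt_or_ge (2 * k + 1) with h | h
  · rw [Nat.mod_eq_of_lt h] at hval
    simp only [symRep, hval]
    split_ifs <;> push_cast <;> omega
  · rw [show a.val + 1 = 2 * k + 1 by omega, Nat.mod_self] at hval
    simp only [symRep, hval]
    split_ifs <;> push_cast <;> omega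

end SymRep

section Corners

variable {N : ℕ} (y x : TPt N) (π : Equiv.Perm (Fin 3))

lemma interPtT_three : interPtT y x π 3 = x := by
  funext i; simp [interPtT]

lemma shiftT_interPtT [NeZero N] (m : Fin 3) :
    shiftT (interPtT y x π m) (π m) (symRep N (x (π m) - y (π m)))
      = interPtT y x π ((m : ℕ) + 1) := by
  funext i
  rcases eq_or_ne i (π m) with rfl | hi
  · simp [shiftT, interPtT, symRep_cast]
  · have hm : (π.symm i : ℕ) ≠ m := fun h => by
      rw [← Fin.ext h, Equiv.apply_symm_apply] at hi
      exact hi rfl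
    simp only [shiftT, interPtT, if_neg hi,
      show (π.symm i : ℕ) < m + 1 ↔ (π.symm i : ℕ) < m by omega]

lemma interPtT_add_unitVec_of_le {μ : Fin 3} {m : ℕ} (h : m ≤ π.symm μ) :
    interPtT y (x + unitVec N μ) π m = interPtT y x π m := by
  funext i
  rcases eq_or_ne i μ with rfl | hi
  · simp [interPtT, h.not_gt]
  · simp [interPtT, unitVec, hi]

lemma interPtT_add_unitVec_of_lt {μ : Fin 3} {m : ℕ} (h : π.symm μ < m) :
    interPtT y (x + unitVec N μ) π m = interPtT y x π m + unitVec N μ := by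
  funext i
  rcases eq_or_ne i μ with rfl | hi
  · simp [interPtT, unitVec, h]
  · simp only [interPtT, Pi.add_apply, unitVec, if_neg hi, add_zero]

end Corners

section AxialGauge

variable {N : ℕ}

/-- The `e_μ`-bond at the `k`-th corner of `Γ^π_{yx}`, counted once the path has made its move in
direction `μ`: the `m`-th legs of `Γ^π_{y,x+e_μ}` and `Γ^π_{yx}` differ by
`cornerBond (m + 1) - cornerBond m`, which telescopes. -/
def cornerBond (A : TPt N → TPt N → ℝ) (π : Equiv.Perm (Fin 3)) (y x : TPt N) (μ : Fin 3)
    (k : ℕ) : ℝ :=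
  if (π.symm μ : ℕ) < k then A (interPtT y x π k) (interPtT y x π k + unitVec N μ) else 0

variable [NeZero N] {A : TPt N → TPt N → ℝ} {π : Equiv.Perm (Fin 3)} {y x : TPt N}
  {μ : Fin 3}

lemma IsFlat.segT_leg_add_unitVec (hA : ∀ x x', A x x' = -A x' x) (hflat : IsFlat A)
    (hstep : symRep N (x μ + 1 - y μ) = symRep N (x μ - y μ) + 1) (m : Fin 3) :
    segT A (interPtT y (x + unitVec N μ) π m) (π m)
        (symRep N ((x + unitVec N μ) (π m) - y (π m)))
      = segT A (interPtT y x π m) (π m) (symRep N (x (π m) - y (π m)))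
        + (cornerBond A π y x μ (m + 1) - cornerBond A π y x μ m) := by
  have hshift := shiftT_interPtT y x π m
  rcases lt_trichotomy (m : ℕ) (π.symm μ) with hlt | heq | hgt
  · have hne : π m ≠ μ := by rintro rfl; simp at hlt
    rw [interPtT_add_unitVec_of_le y x π hlt.le]
    simp [cornerBond, unitVec, hne, hlt.not_gt, Nat.not_lt.mpr hlt]
  · obtain rfl : m = π.symm μ := Fin.ext heq
    rw [Equiv.apply_symm_apply] at hshift ⊢
    rw [interPtT_add_unitVec_of_le y x π le_rfl, Pi.add_apply, unitVec, if_pos rfl, hstep,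
      segT_add_one hA, shiftT_add_one, hshift]
    simp [cornerBond]
  · have hne : π m ≠ μ := by rintro rfl; simp at hgt
    rw [interPtT_add_unitVec_of_lt y x π hgt]
    have := hflat.bond_add_segT_comm hA (interPtT y x π m) hne.symm
      (symRep N (x (π m) - y (π m)))
    rw [hshift] at this
    simp only [cornerBond, hgt, if_true, hgt.trans (lt_add_one _), Pi.add_apply, unitVec,
      if_neg hne, add_zero]
    linarith

lemma IsFlat.gammaSumT_add_unitVec (hA : ∀ x x', A x x' = -A x' x) (hflat : IsFlat A)
    (hstep : symRep N (x μ + 1 - y μ) = symRep N (x μ - y μ) + 1) :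
    gammaSumT A π y (x + unitVec N μ) = gammaSumT A π y x + A x (x + unitVec N μ) := by
  have htelescope : ∑ m : Fin 3, (cornerBond A π y x μ (m + 1) - cornerBond A π y x μ m)
      = A x (x + unitVec N μ) := by
    rw [Fin.sum_univ_eq_sum_range
      (fun m => cornerBond A π y x μ (m + 1) - cornerBond A π y x μ m), sum_range_sub]
    simp [cornerBond, interPtT_three]
  simp only [gammaSumT, hflat.segT_leg_add_unitVec hA hstep, sum_add_distrib, htelescope]

end AxialGauge

theorem torus_axial_gauge_rigidity_general (L : ℕ) (hLodd : Odd L) [NeZero L]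
    (A : TPt L → TPt L → ℝ) (hA : ∀ x x', A x x' = - A x' x)
    (hdA : ∀ (x : TPt L) (μ ν : Fin 3), μ ≠ ν → plaqT A x μ ν = 0)
    (htau : ∀ x : TPt L, gammaSumT A 1 0 x = 0)
    (hQ : ∀ μ : Fin 3, ((L : ℝ) ^ 3)⁻¹ * ∑ x : TPt L, segT A x μ (L : ℤ) = 0) :
    ∀ (x : TPt L) (μ : Fin 3), A x (x + unitVec L μ) = 0 := by
  have hunwrapped : ∀ (y : TPt L) (ν : Fin 3), (y ν).val ≠ (L - 1) / 2 →
      A y (y + unitVec L ν) = 0 := by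
    intro y ν hy
    have h := IsFlat.gammaSumT_add_unitVec (π := 1) (y := 0) hA hdA
      (by simpa using symRep_add_one hLodd hy)
    rw [htau, htau] at h
    linarith
  have hloop : ∀ (μ : Fin 3) (w : TPt L), segT A w μ L = 0 := fun μ =>
    eq_zero_of_forall_add_unitVec_of_sum_eq_zero (IsFlat.segT_loop_add_unitVec hA hdA · μ ·)
      ((mul_eq_zero.mp (hQ μ)).resolve_left (by simp [NeZero.ne L]))
  intro x μ
  by_cases hx : (x μ).val = (L - 1) / 2
  · refine bond_eq_zero_of_segT_loop_eq_zero (hloop μ x) fun y hy => hunwrapped y μ ?_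
    rwa [← hx, Ne, (ZMod.val_injective L).eq_iff]
  · exact hunwrapped x μ hx

/-- If a gauge field `A` on the torus `T = (ℤ/Lℤ)³` has vanishing field
strength on every plaquette, `(τ⁰A)(x) = 0` for every `x`, and the toron averages
`(Q•A)_μ = L⁻³ Σ_x A(Γ_{x,μ})` vanish for `μ = 1,2,3`, then `A` vanishes on every bond. -/
theorem torus_axial_gauge_rigidity (L : ℕ) (hL3 : 3 ≤ L) (hLodd : Odd L) [NeZero L]
    (A : TPt L → TPt L → ℝ) (hA : ∀ x x', A x x' = - A x' x)
    (hdA : ∀ (x : TPt L) (μ ν : Fin 3), μ ≠ ν → plaqT A x μ ν = 0)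
    (htau : ∀ x : TPt L, gammaSumT A 1 0 x = 0)
    (hQ : ∀ μ : Fin 3, ((L : ℝ) ^ 3)⁻¹ * ∑ x : TPt L, segT A x μ (L : ℤ) = 0) :
    ∀ (x : TPt L) (μ : Fin 3), A x (x + unitVec L μ) = 0 :=
  torus_axial_gauge_rigidity_general L hLodd A hA hdA htau hQ
end
end

section
/- Let Z be a gauge field on T with dZ(p) = 0 for every plaquette p of T. Then the coarse field QZ, extended to reversed coarse bonds by antisymmetry, satisfies d(QZ)(P) = 0 for every coarse plaquette P, where d(QZ)(P) is the oriented sum of QZ over the four coarse bonds bounding P. -/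
open Finset

noncomputable section

namespace CoarseCurlAux

variable {N : ℕ}

lemma shiftT_apply (z : TPt N) (μ : Fin 3) (k : ℤ) (i : Fin 3) :
    shiftT z μ k i = if i = μ then z i + (k : ZMod N) else z i := rfl

lemma shiftT_zero (z : TPt N) (μ : Fin 3) : shiftT z μ 0 = z := by
  funext i; simp [shiftT]

lemma shiftT_shiftT (z : TPt N) (μ : Fin 3) (a b : ℤ) :
    shiftT (shiftT z μ a) μ b = shiftT z μ (a + b) := by
  funext i; simp only [shiftT]
  split <;> simp [add_assoc]

lemma shiftT_comm (z : TPt N) {μ ν : Fin 3} (h : μ ≠ ν) (a b : ℤ) :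
    shiftT (shiftT z μ a) ν b = shiftT (shiftT z ν b) μ a := by
  funext i; simp only [shiftT]
  by_cases hμ : i = μ <;> by_cases hν : i = ν <;> simp_all

lemma shiftT_one (z : TPt N) (μ : Fin 3) : shiftT z μ 1 = z + unitVec N μ := by
  funext i; simp only [shiftT, unitVec, Pi.add_apply]
  split <;> simp

/-- Natural-number version of `segT`. -/
def segN (A : TPt N → TPt N → ℝ) (z : TPt N) (μ : Fin 3) (n : ℕ) : ℝ :=
  ∑ j ∈ Finset.range n, A (shiftT z μ (j : ℤ)) (shiftT z μ ((j : ℤ) + 1))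

lemma segT_nat (A : TPt N → TPt N → ℝ) (z : TPt N) (μ : Fin 3) (n : ℕ) :
    segT A z μ (n : ℤ) = segN A z μ n := by
  simp [segT, segN, Int.toNat_natCast]

lemma segN_succ (A : TPt N → TPt N → ℝ) (z : TPt N) (μ : Fin 3) (n : ℕ) :
    segN A z μ (n + 1)
      = segN A z μ n + A (shiftT z μ (n : ℤ)) (shiftT z μ ((n : ℤ) + 1)) := by
  simp [segN, Finset.sum_range_succ]

/-- The plaquette identity, phrased with `shiftT`. -/
lemma plaq_shift {A : TPt N → TPt N → ℝ} (hZ : ∀ x x', A x x' = - A x' x)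
    (hdZ : ∀ (x : TPt N) (μ ν : Fin 3), μ ≠ ν → plaqT A x μ ν = 0)
    {μ ν : Fin 3} (h : μ ≠ ν) (z : TPt N) :
    A z (shiftT z μ 1) + A (shiftT z μ 1) (shiftT (shiftT z μ 1) ν 1)
      = A z (shiftT z ν 1) + A (shiftT z ν 1) (shiftT (shiftT z ν 1) μ 1) := by
  have hp := hdZ z μ ν h
  unfold plaqT at hp
  have e1 : shiftT z μ 1 = z + unitVec N μ := shiftT_one z μ
  have e2 : shiftT z ν 1 = z + unitVec N ν := shiftT_one z ν
  have e3 : shiftT (shiftT z μ 1) ν 1 = z + unitVec N μ + unitVec N ν := by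
    rw [shiftT_one, shiftT_one]
  have e4 : shiftT (shiftT z ν 1) μ 1 = z + unitVec N μ + unitVec N ν := by
    rw [shiftT_one, shiftT_one]; abel
  rw [e3, e4, e1, e2]
  have h1 := hZ (z + unitVec N μ + unitVec N ν) (z + unitVec N ν)
  have h2 := hZ (z + unitVec N ν) z
  linarith

/-- Moving a single `μ`-bond past a `ν`-column. -/
lemma bond_col {A : TPt N → TPt N → ℝ} (hZ : ∀ x x', A x x' = - A x' x)
    (hdZ : ∀ (x : TPt N) (μ ν : Fin 3), μ ≠ ν → plaqT A x μ ν = 0)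
    {μ ν : Fin 3} (h : μ ≠ ν) (z : TPt N) (b : ℕ) :
    A z (shiftT z μ 1) + segN A (shiftT z μ 1) ν b
      = segN A z ν b + A (shiftT z ν (b : ℤ)) (shiftT (shiftT z ν (b : ℤ)) μ 1) := by
  induction b with
  | zero => simp [segN, shiftT_zero]
  | succ b ih =>
      set w := shiftT z ν (b : ℤ) with hw
      have key : A (shiftT (shiftT z μ 1) ν (b : ℤ)) (shiftT (shiftT z μ 1) ν ((b : ℤ) + 1))
          = A (shiftT w μ 1) (shiftT (shiftT w μ 1) ν 1) := by
        have c1 : shiftT (shiftT z μ 1) ν (b : ℤ) = shiftT w μ 1 := by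
          rw [hw, shiftT_comm z h]
        have c2 : shiftT (shiftT z μ 1) ν ((b : ℤ) + 1)
            = shiftT (shiftT w μ 1) ν 1 := by
          rw [hw, ← shiftT_shiftT, shiftT_comm z h]
        rw [c1, c2]
      have hplaq := plaq_shift hZ hdZ h w
      have hb1 : shiftT z ν ((b : ℤ) + 1) = shiftT w ν 1 := by
        rw [hw, shiftT_shiftT]
      have hb2 : shiftT (shiftT z ν ((b : ℤ) + 1)) μ 1
          = shiftT (shiftT w ν 1) μ 1 := by rw [hb1]
      have hwbond : A (shiftT z ν (b : ℤ)) (shiftT z ν ((b : ℤ) + 1))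
          = A w (shiftT w ν 1) := by rw [hb1, hw]
      rw [segN_succ, segN_succ, key]
      push_cast
      rw [hb2, hwbond, hb1]
      linarith

/-- Exchanging a `μ`-segment and a `ν`-segment (discrete Green's theorem). -/
lemma segN_comm {A : TPt N → TPt N → ℝ} (hZ : ∀ x x', A x x' = - A x' x)
    (hdZ : ∀ (x : TPt N) (μ ν : Fin 3), μ ≠ ν → plaqT A x μ ν = 0)
    {μ ν : Fin 3} (h : μ ≠ ν) (z : TPt N) (a b : ℕ) :
    segN A z μ a + segN A (shiftT z μ (a : ℤ)) ν b
      = segN A z ν b + segN A (shiftT z ν (b : ℤ)) μ a := by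
  induction a with
  | zero => simp [segN, shiftT_zero]
  | succ a ih =>
      set u := shiftT z μ (a : ℤ) with hu
      have e1 : shiftT z μ ((a : ℤ) + 1) = shiftT u μ 1 := by
        rw [hu, shiftT_shiftT]
      have hbc := bond_col hZ hdZ h u b
      have e2 : shiftT u ν (b : ℤ) = shiftT (shiftT z ν (b : ℤ)) μ (a : ℤ) := by
        rw [hu, shiftT_comm z h]
      have e3 : shiftT (shiftT u ν (b : ℤ)) μ 1
          = shiftT (shiftT z ν (b : ℤ)) μ ((a : ℤ) + 1) := by
        rw [e2, shiftT_shiftT]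
      rw [segN_succ, segN_succ]
      push_cast
      rw [e1]
      have hbond : A u (shiftT u μ 1) + segN A (shiftT u μ 1) ν b
          = segN A u ν b + A (shiftT (shiftT z ν (b : ℤ)) μ (a : ℤ))
              (shiftT (shiftT z ν (b : ℤ)) μ ((a : ℤ) + 1)) := by
        rw [← e3, ← e2]; exact hbc
      have hbond2 : A (shiftT z μ (a : ℤ)) (shiftT (shiftT z μ (a : ℤ)) μ 1)
          = A u (shiftT u μ 1) := by rw [hu]
      linarith [hbond, ih]

/-- Translation covariance of block sums. -/
lemma block_translate [NeZero N] (R : ℤ) (y v : TPt N) (f : TPt N → ℝ) :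
    ∑ x ∈ blockF N R (y + v), f x = ∑ x ∈ blockF N R y, f (x + v) := by
  apply Finset.sum_nbij' (i := fun x => x - v) (j := fun x => x + v)
  · intro x hx
    simp only [blockF, Finset.mem_filter, Finset.mem_univ, true_and] at hx ⊢
    intro i
    have : (x - v) i - y i = x i - (y + v) i := by
      simp only [Pi.sub_apply, Pi.add_apply]; ring
    rw [this]; exact hx i
  · intro x hx
    simp only [blockF, Finset.mem_filter, Finset.mem_univ, true_and] at hx ⊢
    intro i
    have : (x + v) i - (y + v) i = x i - y i := by
      simp only [Pi.add_apply]; ring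
    rw [this]; exact hx i
  · intro x _; simp
  · intro x _; simp
  · intro x _; simp

lemma add_cUnitVec {L : ℕ} (x : TPt N) (μ : Fin 3) :
    x + cUnitVec L N μ = shiftT x μ (L : ℤ) := by
  funext i; simp only [cUnitVec, shiftT, Pi.add_apply]
  split <;> simp

end CoarseCurlAux

open CoarseCurlAux in
/-- If a gauge field `Z` on `T = (ℤ/L^Mℤ)³` has vanishing field strength
on every plaquette, then the block-averaged field `QZ` (extended to reversed coarse bonds
by antisymmetry) has vanishing coarse field strength: the oriented sum of `QZ` over the
four coarse bonds bounding any coarse plaquette is zero. -/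
theorem coarse_curl_vanishes (L M : ℕ) (hL3 : 3 ≤ L) (hLodd : Odd L) (hM : 2 ≤ M)
    [NeZero (L ^ M)]
    (Z : TPt (L ^ M) → TPt (L ^ M) → ℝ) (hZ : ∀ x x', Z x x' = - Z x' x)
    (hdZ : ∀ (x : TPt (L ^ M)) (μ ν : Fin 3), μ ≠ ν → plaqT Z x μ ν = 0) :
    ∀ y : TPt (L ^ M), isCoarse L (L ^ M) y → ∀ μ ν : Fin 3, μ ≠ ν →
      Qc L Z y μ + Qc L Z (y + cUnitVec L (L ^ M) μ) ν
        - Qc L Z (y + cUnitVec L (L ^ M) ν) μ - Qc L Z y ν = 0 := by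
  intro y _ μ ν hμν
  unfold Qc
  rw [block_translate (((L : ℤ) - 1) / 2) y (cUnitVec L (L ^ M) μ),
    block_translate (((L : ℤ) - 1) / 2) y (cUnitVec L (L ^ M) ν)]
  rw [← mul_add, ← mul_sub, ← mul_sub, ← Finset.sum_add_distrib,
    ← Finset.sum_sub_distrib, ← Finset.sum_sub_distrib]
  have : ∀ x ∈ blockF (L ^ M) (((L : ℤ) - 1) / 2) y,
      segT Z x μ (L : ℤ) + segT Z (x + cUnitVec L (L ^ M) μ) ν (L : ℤ)
        - segT Z (x + cUnitVec L (L ^ M) ν) μ (L : ℤ) - segT Z x ν (L : ℤ) = 0 := by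
    intro x _
    rw [add_cUnitVec, add_cUnitVec, segT_nat, segT_nat, segT_nat, segT_nat]
    have := segN_comm hZ hdZ hμν x L L
    linarith
  rw [Finset.sum_congr rfl this]
  simp
end
end

section
/- The linear map λ ↦ (Q_kλ, R_kΔλ) from ℝ^T to ℝ^{T'} × Δ(ker Q_k) is a bijection. In particular: Δ restricts to a bijection from ker Q_k onto Δ(ker Q_k); dim ℝ^{T'} + dim Δ(ker Q_k) = dim ℝ^T; and if Q_kλ = 0 and R_kΔλ = 0 then λ = 0. -/
open Finset

noncomputable section

/-- The identification of `(ℤ/L^{M-k}ℤ)³` with the coarse lattice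
`T' = (L^kℤ/L^Mℤ)³ ⊆ T = (ℤ/L^Mℤ)³`. -/
def emb (L M k : ℕ) (y : TPt (L ^ (M - k))) : TPt (L ^ M) :=
  fun i => (L : ZMod (L ^ M)) ^ k * (((y i).val : ℕ) : ZMod (L ^ M))

/-- The block-average operator `Q_k : ℝ^T → ℝ^{T'}`,
`(Q_kλ)(y) = L^{-3k} Σ_{x ∈ B^k(y)} λ(x)`. -/
def QkL (L M k : ℕ) [NeZero (L ^ M)] [NeZero (L ^ (M - k))] :
    (TPt (L ^ M) → ℝ) →ₗ[ℝ] (TPt (L ^ (M - k)) → ℝ) where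
  toFun lam := fun y =>
    ((L : ℝ) ^ (3 * k))⁻¹ * ∑ x ∈ blockF (L ^ M) (((L : ℤ) ^ k - 1) / 2) (emb L M k y), lam x
  map_add' f g := by
    funext y
    simp only [Pi.add_apply]
    rw [Finset.sum_add_distrib]
    ring
  map_smul' c f := by
    funext y
    simp only [Pi.smul_apply, smul_eq_mul, RingHom.id_apply, ← Finset.mul_sum]
    ring

/-- The lattice Laplacian `(Δλ)(x) = Σ_{|e|=1} (λ(x+e) − λ(x))`, the sum running over the
six unit vectors `±e_μ`. -/
def lapL (N : ℕ) : (TPt N → ℝ) →ₗ[ℝ] (TPt N → ℝ) where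
  toFun f := fun x =>
    (∑ μ : Fin 3, (f (x + unitVec N μ) - f x)) + ∑ μ : Fin 3, (f (x - unitVec N μ) - f x)
  map_add' f g := by
    funext x
    simp only [Pi.add_apply]
    rw [show (∑ μ : Fin 3, (f (x + unitVec N μ) + g (x + unitVec N μ) - (f x + g x)))
        = (∑ μ : Fin 3, (f (x + unitVec N μ) - f x))
          + ∑ μ : Fin 3, (g (x + unitVec N μ) - g x) by
      rw [← Finset.sum_add_distrib]; exact Finset.sum_congr rfl fun μ _ => by ring]
    rw [show (∑ μ : Fin 3, (f (x - unitVec N μ) + g (x - unitVec N μ) - (f x + g x)))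
        = (∑ μ : Fin 3, (f (x - unitVec N μ) - f x))
          + ∑ μ : Fin 3, (g (x - unitVec N μ) - g x) by
      rw [← Finset.sum_add_distrib]; exact Finset.sum_congr rfl fun μ _ => by ring]
    ring
  map_smul' c f := by
    funext x
    simp only [Pi.smul_apply, smul_eq_mul, RingHom.id_apply]
    rw [show (∑ μ : Fin 3, (c * f (x + unitVec N μ) - c * f x))
        = c * ∑ μ : Fin 3, (f (x + unitVec N μ) - f x) by
      rw [Finset.mul_sum]; exact Finset.sum_congr rfl fun μ _ => by ring]
    rw [show (∑ μ : Fin 3, (c * f (x - unitVec N μ) - c * f x))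
        = c * ∑ μ : Fin 3, (f (x - unitVec N μ) - f x) by
      rw [Finset.mul_sum]; exact Finset.sum_congr rfl fun μ _ => by ring]
    ring

/-- The standard (Euclidean) inner product on `ℝ^ι`. -/
def dotF {ι : Type*} [Fintype ι] (f g : ι → ℝ) : ℝ := ∑ x : ι, f x * g x

/-- The subspace `Δ(ker Q_k) ⊆ ℝ^T`. -/
def Ssub (L M k : ℕ) [NeZero (L ^ M)] [NeZero (L ^ (M - k))] :
    Submodule ℝ (TPt (L ^ M) → ℝ) :=
  (LinearMap.ker (QkL L M k)).map (lapL (L ^ M))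

/-!
Distinct points of the coarse lattice never lie in each other's blocks, so `Q_k` is onto: put mass
`L^{3k} w(y)` at each block centre. Summation by parts gives `⟨λ, Δλ⟩ = -Σ_μ Σ_x (λ(x+e_μ) - λ(x))²`,
so `Δλ = 0` forces `λ` to be constant, and a constant with vanishing block averages is zero; hence
`ker Q_k ∩ ker Δ = 0`. Orthogonality makes `R_k` the identity on `Δ(ker Q_k)`, and all claims then
follow from this trivial intersection, the surjectivity of `Q_k` and rank–nullity.
-/

namespace LinearMap

variable {K V W : Type*} [Field K] [AddCommGroup V] [Module K V] [AddCommGroup W] [Module K W]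
  (Q : V →ₗ[K] W) (D : V →ₗ[K] V)

theorem bijOn_map_ker_of_disjoint (h : Disjoint (ker Q) (ker D)) :
    Set.BijOn D (ker Q) ((ker Q).map D) :=
  ⟨fun _ hv => Submodule.mem_map_of_mem hv, injOn_of_disjoint_ker le_rfl h,
    fun _ hs => Submodule.mem_map.mp hs⟩

theorem finrank_add_finrank_map_ker [FiniteDimensional K V] (hQ : Function.Surjective Q)
    (h : Disjoint (ker Q) (ker D)) :
    Module.finrank K W + Module.finrank K ((ker Q).map D) = Module.finrank K V := by
  have hD : Function.Injective (D.domRestrict (ker Q)) := by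
    rw [← ker_eq_bot, ker_domRestrict, ← Submodule.disjoint_iff_comap_eq_bot]
    exact h
  rw [← range_domRestrict, finrank_range_of_inj hD, ← finrank_range_add_finrank_ker Q,
    range_eq_top.mpr hQ, finrank_top]

variable {Q D} {R : V →ₗ[K] V}

theorem eq_zero_of_map_eq_zero_of_projection_map_eq_zero (h : Disjoint (ker Q) (ker D))
    (hRid : ∀ s ∈ (ker Q).map D, R s = s) {v : V} (hQv : Q v = 0) (hRv : R (D v) = 0) :
    v = 0 := by
  have hDv : D v = 0 := by rw [← hRid _ (Submodule.mem_map_of_mem hQv), hRv]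
  exact Submodule.disjoint_def.mp h v hQv hDv

theorem injective_prod_projection (h : Disjoint (ker Q) (ker D))
    (hRid : ∀ s ∈ (ker Q).map D, R s = s) :
    Function.Injective fun v => (Q v, R (D v)) := by
  have hker : ker (Q.prod (R ∘ₗ D)) = ⊥ := ker_eq_bot'.mpr fun v hv =>
    eq_zero_of_map_eq_zero_of_projection_map_eq_zero h hRid (congrArg Prod.fst hv)
      (congrArg Prod.snd hv)
  exact ker_eq_bot.mp hker

theorem exists_map_eq_projection_eq (hQ : Function.Surjective Q)
    (hRmem : ∀ v, R v ∈ (ker Q).map D) (hRid : ∀ s ∈ (ker Q).map D, R s = s)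
    (w : W) {s : V} (hs : s ∈ (ker Q).map D) : ∃ v, Q v = w ∧ R (D v) = s := by
  obtain ⟨v₀, rfl⟩ := hQ w
  obtain ⟨u, hu, rfl⟩ := Submodule.mem_map.mp hs
  obtain ⟨u₀, hu₀, hDu₀⟩ := Submodule.mem_map.mp (hRmem (D v₀))
  refine ⟨v₀ + u - u₀, ?_, ?_⟩
  · simp [mem_ker.mp hu, mem_ker.mp hu₀]
  · rw [map_sub, map_add, map_sub, map_add, hRid _ hs, ← hDu₀,
      hRid _ (Submodule.mem_map_of_mem hu₀)]
    abel

end LinearMap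

theorem projection_eq_self_of_dotF_orthogonal {ι : Type*} [Fintype ι]
    {S : Submodule ℝ (ι → ℝ)} {R : (ι → ℝ) → ι → ℝ} (hRmem : ∀ v, R v ∈ S)
    (hRorth : ∀ v, ∀ w ∈ S, dotF (v - R v) w = 0) {s : ι → ℝ} (hs : s ∈ S) : R s = s :=
  (sub_eq_zero.mp (dotProduct_self_eq_zero.mp
    (hRorth s _ (S.sub_mem hs (hRmem s))))).symm

theorem sum_mul_secondDifference {G : Type*} [AddCommGroup G] [Fintype G] (f : G → ℝ) (e : G) :
    ∑ x, f x * ((f (x + e) - f x) + (f (x - e) - f x)) = -∑ x, (f (x + e) - f x) ^ 2 := by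
  have hshift : ∑ x, f x * f (x - e) = ∑ x, f (x + e) * f x := by
    rw [← Equiv.sum_comp (Equiv.addRight e)]; simp
  have hsq : ∑ x, f (x + e) ^ 2 = ∑ x, f x ^ 2 := Equiv.sum_comp (Equiv.addRight e) (f · ^ 2)
  have expand : ∀ x, f x * ((f (x + e) - f x) + (f (x - e) - f x)) + (f (x + e) - f x) ^ 2
      = f x * f (x - e) - f (x + e) * f x + (f (x + e) ^ 2 - f x ^ 2) := fun x => by ring
  rw [eq_neg_iff_add_eq_zero, ← Finset.sum_add_distrib, Finset.sum_congr rfl fun x _ => expand x,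
    Finset.sum_add_distrib, Finset.sum_sub_distrib, Finset.sum_sub_distrib, hshift, hsq]
  ring

theorem dotF_lapL (N : ℕ) [NeZero N] (f : TPt N → ℝ) :
    dotF f (lapL N f) = -∑ μ : Fin 3, ∑ x, (f (x + unitVec N μ) - f x) ^ 2 := by
  simp only [dotF, lapL, LinearMap.coe_mk, AddHom.coe_mk, ← Finset.sum_add_distrib,
    Finset.mul_sum]
  rw [Finset.sum_comm, ← Finset.sum_neg_distrib]
  refine Finset.sum_congr rfl fun μ _ => ?_
  rw [← sum_mul_secondDifference]

theorem unitVec_eq_single (N : ℕ) (μ : Fin 3) : unitVec N μ = Pi.single μ 1 := by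
  ext i; simp [unitVec, Pi.single_apply]

theorem periodic_of_periodic_single {ι : Type*} [Fintype ι] [DecidableEq ι] {N : ℕ} [NeZero N]
    {α : Type*} {f : (ι → ZMod N) → α} (h : ∀ i, Function.Periodic f (Pi.single i 1))
    (x : ι → ZMod N) : Function.Periodic f x := by
  have hx : ∑ i, (x i).val • (Pi.single i 1 : ι → ZMod N) = x := by
    conv_rhs => rw [← Finset.univ_sum_single x]
    refine Finset.sum_congr rfl fun i _ => ?_
    rw [← Pi.single_smul, nsmul_one, ZMod.natCast_zmod_val]
  rw [← hx]
  exact Finset.sum_induction _ (Function.Periodic f) (fun _ _ => .add_period)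
    (fun x => congrArg f (add_zero x)) fun i _ => (h i).nsmul _

theorem eq_const_of_lapL_eq_zero {N : ℕ} [NeZero N] {f : TPt N → ℝ} (h : lapL N f = 0)
    (x : TPt N) : f x = f 0 := by
  have hsq := dotF_lapL N f
  rw [h, show dotF f 0 = 0 from dotProduct_zero f, zero_eq_neg,
    Finset.sum_eq_zero_iff_of_nonneg fun _ _ => Finset.sum_nonneg fun _ _ => sq_nonneg _] at hsq
  have hper : ∀ μ, Function.Periodic f (unitVec N μ) := fun μ y => by
    have := (Finset.sum_eq_zero_iff_of_nonneg fun _ _ => sq_nonneg _).mp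
      (hsq μ (Finset.mem_univ _)) y (Finset.mem_univ _)
    exact sub_eq_zero.mp (pow_eq_zero_iff two_ne_zero |>.mp this)
  simpa using periodic_of_periodic_single (fun μ => unitVec_eq_single N μ ▸ hper μ) x 0

theorem intCast_symRep (N : ℕ) [NeZero N] (a : ZMod N) : ((symRep N a : ℤ) : ZMod N) = a := by
  unfold symRep
  split_ifs <;> simp

theorem center_mem_blockF (N : ℕ) [NeZero N] {R : ℤ} (hR : 0 ≤ R) (y : TPt N) :
    y ∈ blockF N R y := by
  have hsymRep : symRep N 0 = 0 := by
    simp [symRep, Nat.one_le_iff_ne_zero.mpr (NeZero.ne N)]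
  simpa [blockF, hsymRep] using hR

section Coarse

theorem pow_ne_zero_of_le {L M k : ℕ} [NeZero (L ^ M)] (hkM : k ≤ M) : L ^ k ≠ 0 :=
  ne_zero_of_dvd_ne_zero (NeZero.ne _) (pow_dvd_pow L hkM)

theorem cast_pow_three_mul_ne_zero {L M k : ℕ} [NeZero (L ^ M)] (hkM : k ≤ M) :
    (L : ℝ) ^ (3 * k) ≠ 0 := by
  rw [pow_mul']; exact pow_ne_zero _ (mod_cast pow_ne_zero_of_le hkM)

variable {L M k : ℕ} [NeZero (L ^ M)] [NeZero (L ^ (M - k))]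

theorem emb_apply_eq_of_abs_symRep_sub_lt (hkM : k ≤ M) {y y' : TPt (L ^ (M - k))} (i : Fin 3)
    (h : |symRep (L ^ M) (emb L M k y i - emb L M k y' i)| < (L : ℤ) ^ k) : y i = y' i := by
  set d : ℤ := (y i).val - (y' i).val
  set s := symRep (L ^ M) (emb L M k y i - emb L M k y' i)
  have hcast : ((s : ℤ) : ZMod (L ^ M)) = (((L : ℤ) ^ k * d : ℤ) : ZMod (L ^ M)) := by
    simp only [s, d, intCast_symRep, emb]
    push_cast
    ring
  -- `s ≡ L^k d (mod L^M)` and `L^k ∣ L^M`, so `L^k ∣ s`;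
  -- as `|s| < L^k`, `s = 0` and then `L^(M-k) ∣ d`.
  obtain ⟨t, ht⟩ := (ZMod.intCast_eq_intCast_iff_dvd_sub _ _ _).mp hcast
  have hLM : ((L ^ M : ℕ) : ℤ) = (L : ℤ) ^ k * (L : ℤ) ^ (M - k) := by
    rw [← pow_add, Nat.add_sub_cancel' hkM]; push_cast; rfl
  have hs : s = (L : ℤ) ^ k * (d - (L : ℤ) ^ (M - k) * t) := by
    rw [hLM] at ht; linear_combination -ht
  have hLk : (L : ℤ) ^ k ≠ 0 := mod_cast pow_ne_zero_of_le hkM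
  have hd : d - (L : ℤ) ^ (M - k) * t = 0 := by
    have hs0 := Int.eq_zero_of_abs_lt_dvd ⟨_, hs⟩ h
    rw [hs] at hs0
    exact (mul_eq_zero.mp hs0).resolve_left hLk
  have hdvd : ((L ^ (M - k) : ℕ) : ℤ) ∣ d := ⟨t, by push_cast; linear_combination hd⟩
  rw [← ZMod.intCast_zmod_eq_zero_iff_dvd] at hdvd
  simpa [d, sub_eq_zero] using hdvd

theorem emb_mem_blockF_emb_iff (hkM : k ≤ M) (y y' : TPt (L ^ (M - k))) :
    emb L M k y ∈ blockF (L ^ M) (((L : ℤ) ^ k - 1) / 2) (emb L M k y') ↔ y = y' := by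
  have hLk : 0 < (L : ℤ) ^ k := mod_cast Nat.pos_of_ne_zero (pow_ne_zero_of_le hkM)
  constructor
  · intro h
    simp only [blockF, Finset.mem_filter, Finset.mem_univ, true_and] at h
    exact funext fun i => emb_apply_eq_of_abs_symRep_sub_lt hkM i (by have := h i; omega)
  · rintro rfl
    exact center_mem_blockF _ (by omega) _

theorem QkL_surjective (hkM : k ≤ M) : Function.Surjective (QkL L M k) := by
  intro w
  refine ⟨fun x => ∑ y, if x = emb L M k y then (L : ℝ) ^ (3 * k) * w y else 0,
    funext fun y' => ?_⟩
  have hdelta : ∀ y, (∑ x ∈ blockF (L ^ M) (((L : ℤ) ^ k - 1) / 2) (emb L M k y'),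
      if x = emb L M k y then (L : ℝ) ^ (3 * k) * w y else 0)
      = if y = y' then (L : ℝ) ^ (3 * k) * w y else 0 := fun y => by
    rw [Finset.sum_ite_eq']
    exact if_congr (emb_mem_blockF_emb_iff hkM y y') rfl rfl
  simp only [QkL, LinearMap.coe_mk, AddHom.coe_mk]
  rw [Finset.sum_comm, Finset.sum_congr rfl fun y _ => hdelta y, Finset.sum_ite_eq']
  simp [cast_pow_three_mul_ne_zero hkM]

theorem disjoint_ker_QkL_ker_lapL (hkM : k ≤ M) :
    Disjoint (LinearMap.ker (QkL L M k)) (LinearMap.ker (lapL (L ^ M))) := by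
  refine Submodule.disjoint_def.mpr fun f hQ hlap => funext fun x => ?_
  have hconst := eq_const_of_lapL_eq_zero (LinearMap.mem_ker.mp hlap)
  have hLk : 0 < (L : ℤ) ^ k := mod_cast Nat.pos_of_ne_zero (pow_ne_zero_of_le hkM)
  have hcard : (blockF (L ^ M) (((L : ℤ) ^ k - 1) / 2) (emb L M k 0)).card ≠ 0 :=
    Finset.card_ne_zero_of_mem (center_mem_blockF _ (by omega) _)
  have hQ0 := congrFun (LinearMap.mem_ker.mp hQ) 0
  simp only [QkL, LinearMap.coe_mk, AddHom.coe_mk, hconst, Finset.sum_const, nsmul_eq_mul,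
    Pi.zero_apply] at hQ0
  rw [hconst x]
  exact mul_eq_zero.mp ((mul_eq_zero.mp hQ0).resolve_left
    (inv_ne_zero (cast_pow_three_mul_ne_zero hkM))) |>.resolve_left (mod_cast hcard)

end Coarse

theorem gauge_fixing_bijection_general (L M k : ℕ)
    (hkM : k ≤ M) [NeZero (L ^ M)] [NeZero (L ^ (M - k))]
    (R : (TPt (L ^ M) → ℝ) →ₗ[ℝ] (TPt (L ^ M) → ℝ))
    (hRmem : ∀ v, R v ∈ Ssub L M k)
    (hRorth : ∀ v, ∀ w ∈ Ssub L M k, dotF (v - R v) w = 0) :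
    Function.Injective
      (fun lam : TPt (L ^ M) → ℝ => (QkL L M k lam, R (lapL (L ^ M) lam))) ∧
    (∀ (w : TPt (L ^ (M - k)) → ℝ) (s : TPt (L ^ M) → ℝ), s ∈ Ssub L M k →
      ∃ lam : TPt (L ^ M) → ℝ, QkL L M k lam = w ∧ R (lapL (L ^ M) lam) = s) ∧
    Set.BijOn (fun lam => lapL (L ^ M) lam)
      ((LinearMap.ker (QkL L M k) : Submodule ℝ (TPt (L ^ M) → ℝ)) : Set (TPt (L ^ M) → ℝ))
      ((Ssub L M k : Submodule ℝ (TPt (L ^ M) → ℝ)) : Set (TPt (L ^ M) → ℝ)) ∧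
    Module.finrank ℝ (TPt (L ^ (M - k)) → ℝ) + Module.finrank ℝ (Ssub L M k)
      = Module.finrank ℝ (TPt (L ^ M) → ℝ) ∧
    (∀ lam : TPt (L ^ M) → ℝ, QkL L M k lam = 0 → R (lapL (L ^ M) lam) = 0 → lam = 0) := by
  have hRid : ∀ s ∈ Ssub L M k, R s = s := fun _ hs =>
    projection_eq_self_of_dotF_orthogonal hRmem hRorth hs
  have hQ : Function.Surjective (QkL L M k) := QkL_surjective hkM
  have hdisj : Disjoint (LinearMap.ker (QkL L M k)) (LinearMap.ker (lapL (L ^ M))) :=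
    disjoint_ker_QkL_ker_lapL hkM
  exact ⟨LinearMap.injective_prod_projection hdisj hRid,
    fun w _ hs => LinearMap.exists_map_eq_projection_eq hQ hRmem hRid w hs,
    LinearMap.bijOn_map_ker_of_disjoint _ _ hdisj,
    LinearMap.finrank_add_finrank_map_ker _ _ hQ hdisj,
    fun _ => LinearMap.eq_zero_of_map_eq_zero_of_projection_map_eq_zero hdisj hRid⟩

/-- Let `R_k` be the orthogonal projection of `ℝ^T` onto the subspace
`S = Δ(ker Q_k)`.  The linear map `λ ↦ (Q_kλ, R_kΔλ)` from `ℝ^T` to `ℝ^{T'} × S` is a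
bijection.  In particular: `Δ` restricts to a bijection from `ker Q_k` onto `Δ(ker Q_k)`;
`dim ℝ^{T'} + dim Δ(ker Q_k) = dim ℝ^T`; and if `Q_kλ = 0` and `R_kΔλ = 0` then `λ = 0`. -/
theorem gauge_fixing_bijection (L M k : ℕ) (hL3 : 3 ≤ L) (hLodd : Odd L)
    (hk : 1 ≤ k) (hkM : k ≤ M) [NeZero (L ^ M)] [NeZero (L ^ (M - k))]
    (R : (TPt (L ^ M) → ℝ) →ₗ[ℝ] (TPt (L ^ M) → ℝ))
    (hRmem : ∀ v, R v ∈ Ssub L M k)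
    (hRorth : ∀ v, ∀ w ∈ Ssub L M k, dotF (v - R v) w = 0) :
    Function.Injective
      (fun lam : TPt (L ^ M) → ℝ => (QkL L M k lam, R (lapL (L ^ M) lam))) ∧
    (∀ (w : TPt (L ^ (M - k)) → ℝ) (s : TPt (L ^ M) → ℝ), s ∈ Ssub L M k →
      ∃ lam : TPt (L ^ M) → ℝ, QkL L M k lam = w ∧ R (lapL (L ^ M) lam) = s) ∧
    Set.BijOn (fun lam => lapL (L ^ M) lam)
      ((LinearMap.ker (QkL L M k) : Submodule ℝ (TPt (L ^ M) → ℝ)) : Set (TPt (L ^ M) → ℝ))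
      ((Ssub L M k : Submodule ℝ (TPt (L ^ M) → ℝ)) : Set (TPt (L ^ M) → ℝ)) ∧
    Module.finrank ℝ (TPt (L ^ (M - k)) → ℝ) + Module.finrank ℝ (Ssub L M k)
      = Module.finrank ℝ (TPt (L ^ M) → ℝ) ∧
    (∀ lam : TPt (L ^ M) → ℝ, QkL L M k lam = 0 → R (lapL (L ^ M) lam) = 0 → lam = 0) :=
  gauge_fixing_bijection_general L M k hkM R hRmem hRorth
end
end

section
/- Let a > 0 and G_k := (−Δ + a·Q_kᵀQ_k)^{-1}, and let R_k be the orthogonal projection of ℝ^T onto Δ(ker Q_k). Then Q_k ∘ G_k ∘ R_k = 0. -/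
open Finset

noncomputable section

/-- Let `a > 0`, let `G_k = (−Δ + a·Q_kᵀQ_k)⁻¹`, and let `R_k` be the
orthogonal projection of `ℝ^T` onto `Δ(ker Q_k)`.  Then `Q_k ∘ G_k ∘ R_k = 0`. -/
theorem Qk_Gk_Rk_eq_zero (L M k : ℕ) (hL3 : 3 ≤ L) (hLodd : Odd L)
    (hk : 1 ≤ k) (hkM : k ≤ M) [NeZero (L ^ M)] [NeZero (L ^ (M - k))]
    (a : ℝ) (ha : 0 < a)
    (Qt : (TPt (L ^ (M - k)) → ℝ) →ₗ[ℝ] (TPt (L ^ M) → ℝ))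
    (hQt : ∀ (v : TPt (L ^ M) → ℝ) (w : TPt (L ^ (M - k)) → ℝ),
      dotF (QkL L M k v) w = dotF v (Qt w))
    (Gk : (TPt (L ^ M) → ℝ) →ₗ[ℝ] (TPt (L ^ M) → ℝ))
    (hGk₁ : Gk ∘ₗ (a • (Qt ∘ₗ QkL L M k) - lapL (L ^ M)) = LinearMap.id)
    (hGk₂ : (a • (Qt ∘ₗ QkL L M k) - lapL (L ^ M)) ∘ₗ Gk = LinearMap.id)
    (R : (TPt (L ^ M) → ℝ) →ₗ[ℝ] (TPt (L ^ M) → ℝ))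
    (hRmem : ∀ v, R v ∈ Ssub L M k)
    (hRorth : ∀ v, ∀ w ∈ Ssub L M k, dotF (v - R v) w = 0) :
    ∀ v : TPt (L ^ M) → ℝ, QkL L M k (Gk (R v)) = 0 := by
  intro v
  obtain ⟨f, hf, hlap⟩ := hRmem v
  have hfker : QkL L M k f = 0 := hf
  have hA : (a • (Qt ∘ₗ QkL L M k) - lapL (L ^ M)) (-f) = R v := by
    simp [map_neg, hfker, hlap]
  have hGf : Gk (R v) = -f := by
    have := LinearMap.congr_fun hGk₁ (-f)
    simpa [LinearMap.comp_apply, hA] using this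
  rw [hGf, map_neg, hfker, neg_zero]
end
end
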